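/- arXiv:1804.01469 — 2 statements merged into one kernel-verified Lean document; each statement's English description precedes it below -/
import Mathlib

section
/- For n = 1 (so F(y₁,y₂) = (cos(y₁+y₂) sin y₁ sin y₂)^{1/2} on the open triangle C⁺ = {y₁,y₂ > 0, y₁+y₂ < π/2}), the Hessian of F is negative definite at every point of C⁺. -/
set_option maxHeartbeats 1000000

lemma ineq2 (c e : ℝ) (hc : 0 < c) (he : 0 < e) (hce : c + e ≤ 1) :
    c * e * (1 - c * e) < (1 - c^2) * (e + 2*c)^2 := by
  have hce1 : c*e ≤ 1/4 := by nlinarith [sq_nonneg (c - e)]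
  rcases le_or_gt c (9/10) with h | h
  · have h8 : (e + 2*c)^2 ≥ 8*(c*e) := by nlinarith [sq_nonneg (e - 2*c)]
    have h19 : (1 - c^2) ≥ 19/100 := by nlinarith
    nlinarith [mul_pos hc he, mul_le_mul_of_nonneg_left h8 (by linarith : (0:ℝ) ≤ 1 - c^2)]
  · have he' : e ≤ 1 - c := by linarith
    have hb1 : (1 - c^2) ≥ e * (1 + c) := by nlinarith
    have hb2 : (e + 2*c)^2 ≥ 4*c^2 := by nlinarith [mul_pos hc he, sq_nonneg e]
    have hb3 : (1 - c^2) * (e + 2*c)^2 ≥ (e * (1 + c)) * (4*c^2) :=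
      mul_le_mul hb1 hb2 (by positivity) (by nlinarith)
    nlinarith [mul_pos hc he, mul_pos (mul_pos he hc) hc]

lemma CS3 (p1 p2 p3 w1 w2 w3 : ℝ) :
    (p1*w1 + p2*w2 + p3*w3)^2 ≤ (p1^2 + p2^2 + p3^2) * (w1^2 + w2^2 + w3^2) := by
  nlinarith [sq_nonneg (p1*w2 - p2*w1), sq_nonneg (p1*w3 - p3*w1), sq_nonneg (p2*w3 - p3*w2)]

lemma stepL (N C k S W : ℝ) (hN : 0 < N) (hW : 0 < W)
    (hCS : (N*S)^2 ≤ (N*(N*C - k^2)) * W) (hkey : N*C - k^2 < 2*N) : S^2 < 2*W := by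
  have h1 : (N*(N*C - k^2)) * W < (N*(2*N)) * W := by
    apply mul_lt_mul_of_pos_right _ hW
    exact mul_lt_mul_of_pos_left hkey hN
  have h2 : (N*S)^2 < N^2 * (2*W) := by nlinarith
  have hN2 : 0 < N^2 := by positivity
  nlinarith [h2]

lemma I2 (su cu sv cv a b : ℝ) :
    (((cu*cv - su*sv)^2 + su^2 + sv^2)*(-(su*cv + cu*sv)) - (-((su*cv + cu*sv)*(cu*cv - su*sv) + su*cu + sv*cv))*(cu*cv - su*sv))*((a+b)*su*sv) + (((cu*cv - su*sv)^2 + su^2 + sv^2)*cu + (-((su*cv + cu*sv)*(cu*cv - su*sv) + su*cu + sv*cv))*su)*(a*(cu*cv - su*sv)*sv) + (((cu*cv - su*sv)^2 + su^2 + sv^2)*cv + (-((su*cv + cu*sv)*(cu*cv - su*sv) + su*cu + sv*cv))*sv)*(b*(cu*cv - su*sv)*su) = ((cu*cv - su*sv)^2 + su^2 + sv^2)*(-(su*cv + cu*sv)*((a+b)*su*sv) + cu*(a*(cu*cv - su*sv)*sv) + cv*(b*(cu*cv - su*sv)*su)) := by ring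

lemma I3 (su cu sv cv a b : ℝ) :
    (((cu*cv - su*sv)^2 + su^2 + sv^2)*(-(su*cv + cu*sv)) - (-((su*cv + cu*sv)*(cu*cv - su*sv) + su*cu + sv*cv))*(cu*cv - su*sv))^2 + (((cu*cv - su*sv)^2 + su^2 + sv^2)*cu + (-((su*cv + cu*sv)*(cu*cv - su*sv) + su*cu + sv*cv))*su)^2 + (((cu*cv - su*sv)^2 + su^2 + sv^2)*cv + (-((su*cv + cu*sv)*(cu*cv - su*sv) + su*cu + sv*cv))*sv)^2 = ((cu*cv - su*sv)^2 + su^2 + sv^2)*(((cu*cv - su*sv)^2 + su^2 + sv^2)*((su*cv + cu*sv)^2 + cu^2 + cv^2) - (-((su*cv + cu*sv)*(cu*cv - su*sv) + su*cu + sv*cv))^2) := by ring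

lemma I1 (su cu sv cv a b : ℝ) (h1 : su^2 + cu^2 = 1) (h2 : sv^2 + cv^2 = 1) :
    2 * ((cu*cv - su*sv)*su*sv) * (a^2 * (-2*(cu*cv - su*sv)*su*sv - 2*(su*cv + cu*sv)*cu*sv) + 2*a*b * (-(cu*cv - su*sv)*su*sv - (su*cv + cu*sv)*su*cv - (su*cv + cu*sv)*cu*sv + (cu*cv - su*sv)*cu*cv) + b^2 * (-2*(cu*cv - su*sv)*su*sv - 2*(su*cv + cu*sv)*su*cv)) - (a * (-(su*cv + cu*sv)*su*sv + (cu*cv - su*sv)*cu*sv) + b * (-(su*cv + cu*sv)*su*sv + (cu*cv - su*sv)*su*cv))^2 = (-(su*cv + cu*sv)*((a+b)*su*sv) + cu*(a*(cu*cv - su*sv)*sv) + cv*(b*(cu*cv - su*sv)*su))^2 - 2*(((a+b)*su*sv)^2 + (a*(cu*cv - su*sv)*sv)^2 + (b*(cu*cv - su*sv)*su)^2) := by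
  linear_combination ((4 : ℝ) * sv^2 * b^2 + (4 : ℝ) * sv^2 * a * b + (2 : ℝ) * sv^2 * a^2 + (-4 : ℝ) * sv^2 * cv^2 * b^2 + (-4 : ℝ) * sv^2 * cv^2 * a * b + (-2 : ℝ) * sv^2 * cv^2 * a^2 + (-4 : ℝ) * sv^4 * b^2 + (-4 : ℝ) * sv^4 * a * b + (-2 : ℝ) * sv^4 * a^2 + (2 : ℝ) * cu^2 * cv^2 * b^2 + (-2 : ℝ) * cu^2 * cv^4 * b^2 + (-2 : ℝ) * cu^2 * sv^2 * b^2 + (-2 : ℝ) * cu^2 * sv^2 * cv^2 * a^2 + (2 : ℝ) * cu^2 * sv^4 * b^2 + (-4 : ℝ) * su * cu * sv * cv * b^2 + (4 : ℝ) * su * cu * sv * cv^3 * b^2 + (4 : ℝ) * su * cu * sv^3 * cv * b^2 + (4 : ℝ) * su * cu * sv^3 * cv * a^2 + (2 : ℝ) * su^2 * sv^2 * b^2 + (-4 : ℝ) * su^2 * sv^2 * cv^2 * b^2 + (-4 : ℝ) * su^2 * sv^2 * cv^2 * a * b + (-2 : ℝ) * su^2 * sv^2 * cv^2 * a^2 +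 (-4 : ℝ) * su^2 * sv^4 * b^2 + (-4 : ℝ) * su^2 * sv^4 * a * b + (-4 : ℝ) * su^2 * sv^4 * a^2) * h1 + ((-4 : ℝ) * sv^2 * b^2 + (-4 : ℝ) * sv^2 * a * b + (-2 : ℝ) * sv^2 * a^2 + (-2 : ℝ) * cu^2 * cv^2 * b^2 + (6 : ℝ) * cu^2 * sv^2 * b^2 + (4 : ℝ) * cu^2 * sv^2 * a * b + (2 : ℝ) * cu^2 * sv^2 * a^2 + (2 : ℝ) * cu^4 * cv^2 * b^2 + (-2 : ℝ) * cu^4 * sv^2 * b^2 + (4 : ℝ) * su * cu * sv * cv * b^2 + (-4 : ℝ) * su * cu^3 * sv * cv * b^2) * h2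

lemma I4 (su cu sv cv : ℝ) (hsu : 0 < su) (hcu : 0 < cu) (hsv : 0 < sv) (hcv : 0 < cv)
    (h1 : su^2 + cu^2 = 1) (h2 : sv^2 + cv^2 = 1) (hcs : 0 < cu*cv - su*sv) :
    ((cu*cv - su*sv)^2 + su^2 + sv^2)*((su*cv + cu*sv)^2 + cu^2 + cv^2) - (-((su*cv + cu*sv)*(cu*cv - su*sv) + su*cu + sv*cv))^2 < 2*((cu*cv - su*sv)^2 + su^2 + sv^2) := by
  have hprod : (su^2+cu^2)*(sv^2+cv^2) = 1 := by rw [h1, h2]; ring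
  have hd2 : (cu*cv + su*sv)^2 ≤ 1 := by nlinarith [sq_nonneg (cu*sv - su*cv), hprod]
  have hdpos : 0 < cu*cv + su*sv := by positivity
  have hd1 : cu*cv + su*sv ≤ 1 := by nlinarith [hd2, hdpos]
  have he : (0:ℝ) < 2*(su*sv) := by positivity
  have hsum : (cu*cv - su*sv) + 2*(su*sv) ≤ 1 := by linarith
  have i2 := ineq2 (cu*cv - su*sv) (2*(su*sv)) hcs he hsum
  have hEq : ((cu*cv - su*sv)^2 + su^2 + sv^2)*((su*cv + cu*sv)^2 + cu^2 + cv^2) - (-((su*cv + cu*sv)*(cu*cv - su*sv) + su*cu + sv*cv))^2 - 2*((cu*cv - su*sv)^2 + su^2 + sv^2)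
      = (cu*cv - su*sv)*(2*(su*sv))*(1 - (cu*cv - su*sv)*(2*(su*sv))) - (1 - (cu*cv - su*sv)^2)*((2*(su*sv)) + 2*(cu*cv - su*sv))^2 := by
    linear_combination ((-2 : ℝ) + (2 : ℝ) * cv^2 + (4 : ℝ) * sv^2 * cv^2 + (4 : ℝ) * sv^4 + (-3 : ℝ) * cu^2 * cv^2 + (4 : ℝ) * cu^2 * sv^2 + (-4 : ℝ) * cu^2 * sv^4 + (4 : ℝ) * su * cu * sv * cv + (-8 : ℝ) * su * cu * sv^3 * cv + (1 : ℝ) * su^2 * cv^2 + (4 : ℝ) * su^2 * sv^4) * h1 + ((2 : ℝ) + (4 : ℝ) * sv^2 + (-2 : ℝ) * cu^2 + (1 : ℝ) * cu^2 * cv^2 + (-7 : ℝ) * cu^2 * sv^2 + (-4 : ℝ) * cu^4 * cv^2 + (4 : ℝ) * cu^4 * sv^2 + (-4 : ℝ) * su * cu * sv * cv + (8 : ℝ) * su * cu^3 * sv * cv) * h2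
  linarith [i2, hEq]

lemma keyP (su cu sv cv a b : ℝ) (hsu : 0 < su) (hcu : 0 < cu) (hsv : 0 < sv) (hcv : 0 < cv)
    (h1 : su^2 + cu^2 = 1) (h2 : sv^2 + cv^2 = 1) (hcs : 0 < cu*cv - su*sv)
    (hab : a ≠ 0 ∨ b ≠ 0) :
    2 * ((cu*cv - su*sv)*su*sv) * (a^2 * (-2*(cu*cv - su*sv)*su*sv - 2*(su*cv + cu*sv)*cu*sv) + 2*a*b * (-(cu*cv - su*sv)*su*sv - (su*cv + cu*sv)*su*cv - (su*cv + cu*sv)*cu*sv + (cu*cv - su*sv)*cu*cv) + b^2 * (-2*(cu*cv - su*sv)*su*sv - 2*(su*cv + cu*sv)*su*cv)) - (a * (-(su*cv + cu*sv)*su*sv + (cu*cv - su*sv)*cu*sv) + b * (-(su*cv + cu*sv)*su*sv + (cu*cv - su*sv)*su*cv))^2 < 0 := by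
  rw [I1 su cu sv cv a b h1 h2]
  have hW : 0 < (((a+b)*su*sv)^2 + (a*(cu*cv - su*sv)*sv)^2 + (b*(cu*cv - su*sv)*su)^2) := by
    rcases hab with ha | hb
    · have hY : a*(cu*cv - su*sv)*sv ≠ 0 := mul_ne_zero (mul_ne_zero ha (ne_of_gt hcs)) (ne_of_gt hsv)
      nlinarith [sq_nonneg ((a+b)*su*sv), sq_nonneg (b*(cu*cv - su*sv)*su), sq_pos_of_ne_zero hY]
    · have hZ : b*(cu*cv - su*sv)*su ≠ 0 := mul_ne_zero (mul_ne_zero hb (ne_of_gt hcs)) (ne_of_gt hsu)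
      nlinarith [sq_nonneg ((a+b)*su*sv), sq_nonneg (a*(cu*cv - su*sv)*sv), sq_pos_of_ne_zero hZ]
  have hN : 0 < ((cu*cv - su*sv)^2 + su^2 + sv^2) := by positivity
  have hcs3 := CS3 (((cu*cv - su*sv)^2 + su^2 + sv^2)*(-(su*cv + cu*sv)) - (-((su*cv + cu*sv)*(cu*cv - su*sv) + su*cu + sv*cv))*(cu*cv - su*sv)) (((cu*cv - su*sv)^2 + su^2 + sv^2)*cu + (-((su*cv + cu*sv)*(cu*cv - su*sv) + su*cu + sv*cv))*su) (((cu*cv - su*sv)^2 + su^2 + sv^2)*cv + (-((su*cv + cu*sv)*(cu*cv - su*sv) + su*cu + sv*cv))*sv) ((a+b)*su*sv) (a*(cu*cv - su*sv)*sv) (b*(cu*cv - su*sv)*su)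
  rw [I2 su cu sv cv a b, I3 su cu sv cv a b] at hcs3
  have := stepL ((cu*cv - su*sv)^2 + su^2 + sv^2) ((su*cv + cu*sv)^2 + cu^2 + cv^2) (-((su*cv + cu*sv)*(cu*cv - su*sv) + su*cu + sv*cv)) (-(su*cv + cu*sv)*((a+b)*su*sv) + cu*(a*(cu*cv - su*sv)*sv) + cv*(b*(cu*cv - su*sv)*su)) (((a+b)*su*sv)^2 + (a*(cu*cv - su*sv)*sv)^2 + (b*(cu*cv - su*sv)*su)^2) hN hW hcs3 (I4 su cu sv cv hsu hcu hsv hcv h1 h2 hcs)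
  linarith [this]

lemma assemble (r H gg : ℝ) (hr : 0 < r) (hK : 2*r^2*H - gg < 0) :
    (2*r)⁻¹ * H - ((2*r)^2)⁻¹ * (2*(2*r)⁻¹) * gg < 0 := by
  have hrne : r ≠ 0 := hr.ne'
  have heq : (2*r)⁻¹ * H - ((2*r)^2)⁻¹ * (2*(2*r)⁻¹) * gg = (2*r^2*H - gg)/(4*r^3) := by
    field_simp; ring
  rw [heq]
  exact div_neg_of_neg_of_pos hK (by positivity)


noncomputable section

open Real ContinuousLinearMap

def Pr0 : (Fin 2 → ℝ) →L[ℝ] ℝ := ContinuousLinearMap.proj 0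
def Pr1 : (Fin 2 → ℝ) →L[ℝ] ℝ := ContinuousLinearMap.proj 1

def Gfun : (Fin 2 → ℝ) → ℝ := fun z => Real.cos (z 0 + z 1) * Real.sin (z 0) * Real.sin (z 1)

def Gu : (Fin 2 → ℝ) → ℝ := fun z =>
  -Real.sin (z 0 + z 1) * Real.sin (z 0) * Real.sin (z 1)
  + Real.cos (z 0 + z 1) * Real.cos (z 0) * Real.sin (z 1)

def Gv : (Fin 2 → ℝ) → ℝ := fun z =>
  -Real.sin (z 0 + z 1) * Real.sin (z 0) * Real.sin (z 1)
  + Real.cos (z 0 + z 1) * Real.sin (z 0) * Real.cos (z 1)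

def LG : (Fin 2 → ℝ) → ((Fin 2 → ℝ) →L[ℝ] ℝ) := fun z => Gu z • Pr0 + Gv z • Pr1

lemma hPr0 (z : Fin 2 → ℝ) : HasFDerivAt (fun w : Fin 2 → ℝ => w 0) Pr0 z :=
  (ContinuousLinearMap.proj 0 : (Fin 2 → ℝ) →L[ℝ] ℝ).hasFDerivAt

lemma hPr1 (z : Fin 2 → ℝ) : HasFDerivAt (fun w : Fin 2 → ℝ => w 1) Pr1 z :=
  (ContinuousLinearMap.proj 1 : (Fin 2 → ℝ) →L[ℝ] ℝ).hasFDerivAt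

lemma hGd (z : Fin 2 → ℝ) : HasFDerivAt Gfun (LG z) z := by
  have hsum := (hPr0 z).add (hPr1 z)
  have hcos := (Real.hasDerivAt_cos (z 0 + z 1)).comp_hasFDerivAt z hsum
  have hsin0 := (Real.hasDerivAt_sin (z 0)).comp_hasFDerivAt z (hPr0 z)
  have hsin1 := (Real.hasDerivAt_sin (z 1)).comp_hasFDerivAt z (hPr1 z)
  have hmul := (hcos.mul hsin0).mul hsin1
  refine hmul.congr_fderiv ?_
  ext w
  simp [LG, Gu, Gv, Pr0, Pr1, Function.comp, smul_eq_mul]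
  ring

def D1 : (Fin 2 → ℝ) → ((Fin 2 → ℝ) →L[ℝ] ℝ) := fun z => (2 * Real.sqrt (Gfun z))⁻¹ • LG z

lemma hFd (z : Fin 2 → ℝ) (hz : 0 < Gfun z) :
    HasFDerivAt (fun w => Real.sqrt (Gfun w)) (D1 z) z :=
  ((hGd z).sqrt (ne_of_gt hz)).congr_fderiv (by rw [one_div]; rfl)

lemma hGcont : Continuous Gfun := by
  unfold Gfun; fun_prop

lemma hGpos (y : Fin 2 → ℝ) (h0 : 0 < y 0) (h1 : 0 < y 1) (hs : y 0 + y 1 < Real.pi / 2) :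
    0 < Gfun y := by
  have hc : 0 < Real.cos (y 0 + y 1) :=
    Real.cos_pos_of_mem_Ioo ⟨by nlinarith [Real.pi_pos], hs⟩
  have hs0 : 0 < Real.sin (y 0) :=
    Real.sin_pos_of_pos_of_lt_pi h0 (by nlinarith [Real.pi_pos])
  have hs1 : 0 < Real.sin (y 1) :=
    Real.sin_pos_of_pos_of_lt_pi h1 (by nlinarith [Real.pi_pos])
  exact mul_pos (mul_pos hc hs0) hs1

lemma hfd_eq (y : Fin 2 → ℝ) (hy : 0 < Gfun y) :
    fderiv ℝ (fun w => Real.sqrt (Gfun w)) =ᶠ[nhds y] D1 := by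
  have hev : ∀ᶠ z in nhds y, 0 < Gfun z :=
    (hGcont.continuousAt).eventually_mem (Ioi_mem_nhds hy) |>.mono (fun z hz => hz)
  exact hev.mono fun z hz => (hFd z hz).fderiv

def Guu : (Fin 2 → ℝ) → ℝ := fun z =>
  -2 * Real.cos (z 0 + z 1) * Real.sin (z 0) * Real.sin (z 1)
  - 2 * Real.sin (z 0 + z 1) * Real.cos (z 0) * Real.sin (z 1)

def Guv : (Fin 2 → ℝ) → ℝ := fun z =>
  -Real.cos (z 0 + z 1) * Real.sin (z 0) * Real.sin (z 1)
  - Real.sin (z 0 + z 1) * Real.sin (z 0) * Real.cos (z 1)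
  - Real.sin (z 0 + z 1) * Real.cos (z 0) * Real.sin (z 1)
  + Real.cos (z 0 + z 1) * Real.cos (z 0) * Real.cos (z 1)

def Gvv : (Fin 2 → ℝ) → ℝ := fun z =>
  -2 * Real.cos (z 0 + z 1) * Real.sin (z 0) * Real.sin (z 1)
  - 2 * Real.sin (z 0 + z 1) * Real.sin (z 0) * Real.cos (z 1)

lemma hGud (z : Fin 2 → ℝ) : HasFDerivAt Gu (Guu z • Pr0 + Guv z • Pr1) z := by
  have hsum := (hPr0 z).add (hPr1 z)
  have hcosS := (Real.hasDerivAt_cos (z 0 + z 1)).comp_hasFDerivAt z hsum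
  have hsinS := (Real.hasDerivAt_sin (z 0 + z 1)).comp_hasFDerivAt z hsum
  have hsin0 := (Real.hasDerivAt_sin (z 0)).comp_hasFDerivAt z (hPr0 z)
  have hsin1 := (Real.hasDerivAt_sin (z 1)).comp_hasFDerivAt z (hPr1 z)
  have hcos0 := (Real.hasDerivAt_cos (z 0)).comp_hasFDerivAt z (hPr0 z)
  have hmul := ((hsinS.neg.mul hsin0).mul hsin1).add ((hcosS.mul hcos0).mul hsin1)
  refine hmul.congr_fderiv ?_
  ext w
  simp [Guu, Guv, Pr0, Pr1, Function.comp, smul_eq_mul]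
  ring

lemma hGvd (z : Fin 2 → ℝ) : HasFDerivAt Gv (Guv z • Pr0 + Gvv z • Pr1) z := by
  have hsum := (hPr0 z).add (hPr1 z)
  have hcosS := (Real.hasDerivAt_cos (z 0 + z 1)).comp_hasFDerivAt z hsum
  have hsinS := (Real.hasDerivAt_sin (z 0 + z 1)).comp_hasFDerivAt z hsum
  have hsin0 := (Real.hasDerivAt_sin (z 0)).comp_hasFDerivAt z (hPr0 z)
  have hsin1 := (Real.hasDerivAt_sin (z 1)).comp_hasFDerivAt z (hPr1 z)
  have hcos1 := (Real.hasDerivAt_cos (z 1)).comp_hasFDerivAt z (hPr1 z)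
  have hmul := ((hsinS.neg.mul hsin0).mul hsin1).add ((hcosS.mul hsin0).mul hcos1)
  refine hmul.congr_fderiv ?_
  ext w
  simp [Guv, Gvv, Pr0, Pr1, Function.comp, smul_eq_mul]
  ring

lemma second_deriv (y : Fin 2 → ℝ) (hy : 0 < Gfun y) (v : Fin 2 → ℝ) :
    fderiv ℝ (fderiv ℝ (fun w => Real.sqrt (Gfun w))) y v v
    = (2 * Real.sqrt (Gfun y))⁻¹ * ((Guu y * v 0 + Guv y * v 1) * v 0
        + (Guv y * v 0 + Gvv y * v 1) * v 1)
      - ((2 * Real.sqrt (Gfun y))^2)⁻¹ * (2 * (2 * Real.sqrt (Gfun y))⁻¹)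
        * ((Gu y * v 0 + Gv y * v 1) * (Gu y * v 0 + Gv y * v 1)) := by
  have hsq : Real.sqrt (Gfun y) ≠ 0 := by positivity
  have h2s : (2 * Real.sqrt (Gfun y)) ≠ 0 := by positivity
  have hLG : HasFDerivAt LG
      (((Guu y • Pr0 + Guv y • Pr1).smulRight Pr0) + ((Guv y • Pr0 + Gvv y • Pr1).smulRight Pr1)) y :=
    ((hGud y).smul_const Pr0).add ((hGvd y).smul_const Pr1)
  have h2sd : HasFDerivAt (fun z => 2 * Real.sqrt (Gfun z)) ((2:ℝ) • D1 y) y :=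
    (hFd y hy).const_mul 2
  have hinv := (hasDerivAt_inv h2s).comp_hasFDerivAt y h2sd
  have hD1 : HasFDerivAt D1
      ((2 * Real.sqrt (Gfun y))⁻¹ • (((Guu y • Pr0 + Guv y • Pr1).smulRight Pr0) + ((Guv y • Pr0 + Gvv y • Pr1).smulRight Pr1))
        + (-((2 * Real.sqrt (Gfun y)) ^ 2)⁻¹ • (2:ℝ) • D1 y).smulRight (LG y)) y :=
    hinv.smul hLG
  rw [(hfd_eq y hy).fderiv_eq, hD1.fderiv]
  simp only [D1, LG, ContinuousLinearMap.add_apply, ContinuousLinearMap.smul_apply,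
    ContinuousLinearMap.smulRight_apply, ContinuousLinearMap.coe_smul', Pi.smul_apply,
    Pr0, Pr1, ContinuousLinearMap.proj_apply, smul_eq_mul, neg_smul, neg_mul,
    ContinuousLinearMap.neg_apply]
  ring

/-- For `n = 1`, the Hessian of `F(y₁,y₂) = (cos(y₁+y₂) sin y₁ sin y₂)^{1/2}` is
negative definite at every point of the open triangle `C⁺ = {y₁,y₂>0, y₁+y₂<π/2}`. -/
theorem stmt7 (y : Fin 2 → ℝ)
    (hy : 0 < y 0 ∧ 0 < y 1 ∧ y 0 + y 1 < Real.pi / 2)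
    (v : Fin 2 → ℝ) (hv : v ≠ 0) :
    iteratedFDeriv ℝ 2
      (fun z : Fin 2 → ℝ => Real.sqrt (Real.cos (z 0 + z 1) * Real.sin (z 0) * Real.sin (z 1)))
      y (fun _ => v) < 0 := by
  obtain ⟨h0, h1, hsum⟩ := hy
  have hG : 0 < Gfun y := hGpos y h0 h1 hsum
  have hgoal : iteratedFDeriv ℝ 2
      (fun z : Fin 2 → ℝ => Real.sqrt (Real.cos (z 0 + z 1) * Real.sin (z 0) * Real.sin (z 1)))
      y (fun _ => v) = fderiv ℝ (fderiv ℝ (fun w => Real.sqrt (Gfun w))) y v v := by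
    rw [iteratedFDeriv_two_apply]
    rfl
  rw [hgoal, second_deriv y hG v]
  simp only [Guu, Guv, Gvv, Gu, Gv, Gfun, Real.sin_add, Real.cos_add]
  set su := Real.sin (y 0) with hsu_def
  set cu := Real.cos (y 0) with hcu_def
  set sv := Real.sin (y 1) with hsv_def
  set cv := Real.cos (y 1) with hcv_def
  have hcos : 0 < Real.cos (y 0 + y 1) :=
    Real.cos_pos_of_mem_Ioo ⟨by nlinarith [Real.pi_pos], hsum⟩
  rw [Real.cos_add] at hcos
  have hsu : 0 < su := Real.sin_pos_of_pos_of_lt_pi h0 (by nlinarith [Real.pi_pos])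
  have hsv : 0 < sv := Real.sin_pos_of_pos_of_lt_pi h1 (by nlinarith [Real.pi_pos])
  have hcu : 0 < cu := Real.cos_pos_of_mem_Ioo ⟨by nlinarith [Real.pi_pos], by nlinarith [Real.pi_pos]⟩
  have hcv : 0 < cv := Real.cos_pos_of_mem_Ioo ⟨by nlinarith [Real.pi_pos], by nlinarith [Real.pi_pos]⟩
  have hXpos : (0:ℝ) < (cu * cv - su * sv) * su * sv := by positivity
  set r := Real.sqrt ((cu * cv - su * sv) * su * sv) with hr_def
  have hr : 0 < r := Real.sqrt_pos.mpr hXpos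
  have hr2 : r ^ 2 = (cu * cv - su * sv) * su * sv := Real.sq_sqrt hXpos.le
  have hab : v 0 ≠ 0 ∨ v 1 ≠ 0 := by
    by_contra h
    push_neg at h
    exact hv (funext fun i => by fin_cases i <;> simp [h.1, h.2])
  have key := keyP su cu sv cv (v 0) (v 1) hsu hcu hsv hcv
    (Real.sin_sq_add_cos_sq (y 0)) (Real.sin_sq_add_cos_sq (y 1)) hcos hab
  rw [← hr2] at key
  refine assemble r _ _ hr ?_
  linarith [key]
end
end

section
/- Let y ∈ ℝ³ satisfy 0 < y₁ ≤ y_j and 0 < 2y_j + Σ_{k≠j} y_k ≤ π/2 for all j = 1,2,3, and y₃ ≥ y₂. Define h₁(y) = cos(2y₁+y₂+y₃) sin y₂ sin y₃ / (cos(y₁+y₂+y₃) sin y₁ sin y₂ sin y₃)^{2/3}. Then there exists a universal constant c > 0 (independent of y) such that h₁(y) ≤ c·(sin y₃ / sin y₁) ≤ 2c·(y₃/y₁). -/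
/-!
With `c = 1`: after cancelling `sin y₃`, the first bound says
`cos(2y₁+y₂+y₃) sin y₂ sin y₁ ≤ (cos(y₁+y₂+y₃) sin y₁ sin y₂ sin y₃)^{2/3}`, and cubing reduces it to
`cos³(2y₁+y₂+y₃) sin y₁ sin y₂ ≤ cos²(y₁+y₂+y₃) sin² y₃`. This holds because both cosines lie in
`[0, 1]` with the first one smaller (cosine decreases on `[0, π/2]`), and `sin y₁, sin y₂ ≤ sin y₃`.
The second bound is `sin y₃ ≤ y₃` together with Jordan's inequality `sin y₁ ≥ (2/π) y₁ ≥ y₁/2`.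
-/

open Real

lemma le_rpow_two_div_three_of_pow_three_le {x P : ℝ} (hx : 0 ≤ x) (hP : 0 ≤ P)
    (h : x ^ 3 ≤ P ^ 2) : x ≤ P ^ ((2 : ℝ) / 3) := by
  have hcube : (P ^ ((2 : ℝ) / 3)) ^ 3 = P ^ 2 := by
    rw [← rpow_natCast, ← rpow_mul hP, ← rpow_natCast]
    norm_num
  exact (pow_le_pow_iff_left₀ hx (by positivity) three_ne_zero).mp (hcube ▸ h)

lemma mul_div_rpow_two_div_three_le {t s a b d : ℝ} (ht : 0 ≤ t) (hts : t ≤ s) (hs : s ≤ 1)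
    (ha : 0 < a) (hb : 0 < b) (had : a ≤ d) (hbd : b ≤ d) :
    t * b * d / (s * a * b * d) ^ ((2 : ℝ) / 3) ≤ d / a := by
  have hd : 0 < d := ha.trans_le had
  have hs0 : 0 ≤ s := ht.trans hts
  have hcos : t ^ 3 ≤ s ^ 2 :=
    calc t ^ 3 ≤ s ^ 3 := pow_le_pow_left₀ ht hts 3
      _ ≤ s ^ 2 := pow_le_pow_of_le_one hs0 hs (by norm_num)
  have hsin : a * b ≤ d ^ 2 := by nlinarith
  have hcube : (t * b * a) ^ 3 ≤ (s * a * b * d) ^ 2 :=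
    calc (t * b * a) ^ 3 = t ^ 3 * (a * b) * (a ^ 2 * b ^ 2) := by ring
      _ ≤ s ^ 2 * d ^ 2 * (a ^ 2 * b ^ 2) := by gcongr
      _ = (s * a * b * d) ^ 2 := by ring
  have key := le_rpow_two_div_three_of_pow_three_le (by positivity) (by positivity) hcube
  refine div_le_of_le_mul₀ (by positivity) (by positivity) ?_
  calc t * b * d = d / a * (t * b * a) := by field_simp
    _ ≤ d / a * (s * a * b * d) ^ ((2 : ℝ) / 3) := by gcongr

lemma sin_div_sin_le_two_mul_div {a d : ℝ} (ha : 0 < a) (ha' : a ≤ π / 2) (hd : 0 ≤ d) :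
    sin d / sin a ≤ 2 * (d / a) := by
  have hsin_a : a / 2 ≤ sin a := by
    have h_half : (1 : ℝ) / 2 ≤ 2 / π := by
      rw [div_le_div_iff₀ two_pos pi_pos]
      linarith [pi_le_four]
    nlinarith [mul_le_sin ha.le ha']
  calc sin d / sin a ≤ d / (a / 2) :=
        div_le_div₀ hd (sin_le hd) (by positivity) hsin_a
    _ = 2 * (d / a) := by field_simp

lemma cos_mul_sin_mul_sin_div_rpow_le {a b d : ℝ} (ha : 0 < a) (hb : 0 < b) (had : a ≤ d)
    (hbd : b ≤ d) (hsum : 2 * a + b + d ≤ π / 2) :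
    cos (2 * a + b + d) * sin b * sin d /
        (cos (a + b + d) * sin a * sin b * sin d) ^ ((2 : ℝ) / 3) ≤ sin d / sin a := by
  have hd_le : d ≤ π / 2 := by linarith
  refine mul_div_rpow_two_div_three_le
    (cos_nonneg_of_mem_Icc ⟨by linarith, by linarith⟩)
    (cos_le_cos_of_nonneg_of_le_pi (by linarith) (by linarith) (by linarith))
    (cos_le_one _)
    (sin_pos_of_pos_of_lt_pi ha (by linarith))
    (sin_pos_of_pos_of_lt_pi hb (by linarith))
    (sin_le_sin_of_le_of_le_pi_div_two (by linarith) hd_le had)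
    (sin_le_sin_of_le_of_le_pi_div_two (by linarith) hd_le hbd)

/-- Key estimate: for `y ∈ ℝ³` with `0 < y₁ ≤ y_j`, `0 < 2y_j + Σ_{k≠j} y_k ≤ π/2`
for all `j`, and `y₃ ≥ y₂`, one has
`h₁(y) ≤ c (sin y₃ / sin y₁) ≤ 2c (y₃/y₁)` for a universal constant `c > 0`. -/
theorem stmt14 :
    ∃ c : ℝ, 0 < c ∧
      ∀ y : Fin 3 → ℝ,
        (∀ j, 0 < y 0 ∧ y 0 ≤ y j) →
        (∀ j, 0 < 2 * y j + ∑ k ∈ Finset.univ.erase j, y k ∧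
              2 * y j + ∑ k ∈ Finset.univ.erase j, y k ≤ Real.pi / 2) →
        y 1 ≤ y 2 →
        (Real.cos (2 * y 0 + y 1 + y 2) * Real.sin (y 1) * Real.sin (y 2) /
            (Real.cos (y 0 + y 1 + y 2) * Real.sin (y 0) * Real.sin (y 1) * Real.sin (y 2))
              ^ ((2:ℝ)/3)
          ≤ c * (Real.sin (y 2) / Real.sin (y 0))) ∧
        c * (Real.sin (y 2) / Real.sin (y 0)) ≤ 2 * c * (y 2 / y 0) := by
  refine ⟨1, one_pos, fun y hmin hsum h12 => ?_⟩
  obtain ⟨h0, h01⟩ := hmin 1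
  have h02 := (hmin 2).2
  have hsum0 : 2 * y 0 + y 1 + y 2 ≤ π / 2 := by
    have h := (hsum 0).2
    rwa [show Finset.univ.erase (0 : Fin 3) = {1, 2} by decide, Finset.sum_pair (by decide),
      ← add_assoc] at h
  rw [one_mul, mul_one]
  exact ⟨cos_mul_sin_mul_sin_div_rpow_le h0 (h0.trans_le h01) h02 h12 hsum0,
    sin_div_sin_le_two_mul_div h0 (by linarith) (by linarith)⟩
end
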